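/- Let m ≥ 1 and let Q be an m×m real matrix with zero row sums such that 0 is a root of multiplicity one of the characteristic polynomial of Q over ℂ and every other complex root has strictly negative real part. Define the (m−1)×(m−1) real matrix C by C_{ij} = Q_{ji} − Q_{mi} for i,j ∈ {1,...,m−1}. Then C is stable: every complex root of the characteristic polynomial of C has strictly negative real part. -/

import Mathlib

open Matrix Polynomial

lemma charpoly_conj_aux {R : Type*} [CommRing R] {m : Type*} [Fintype m] [DecidableEq m]
    (P P' M : Matrix m m R) (h : P * P' = 1) (h' : P' * P = 1) :
    (P * M * P').charpoly = M.charpoly := by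
  have key : charmatrix (P * M * P') = P.map C * charmatrix M * P'.map C := by
    unfold charmatrix
    simp only [RingHom.mapMatrix_apply, mul_sub, sub_mul]
    congr 1
    · rw [Matrix.mul_assoc, scalar_commute (X : R[X]) (Commute.all _) (P'.map C),
        ← Matrix.mul_assoc, ← Matrix.map_mul, h,
        Matrix.map_one _ (map_zero _) (map_one _), Matrix.one_mul]
    · simp [Matrix.map_mul]
  rw [Matrix.charpoly, key, det_mul, det_mul, mul_comm, ← mul_assoc, ← det_mul, ← Matrix.map_mul,
    h', Matrix.map_one _ (map_zero _) (map_one _), det_one, one_mul, Matrix.charpoly]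

lemma charpoly_transpose' {R : Type*} [CommRing R] {m : Type*} [Fintype m] [DecidableEq m]
    (M : Matrix m m R) : Mᵀ.charpoly = M.charpoly := by
  rw [Matrix.charpoly, Matrix.charpoly, ← det_transpose]
  congr 1
  unfold charmatrix
  ext i j
  by_cases h : i = j <;> simp [Matrix.scalar_apply, Matrix.diagonal, h, eq_comm]

/-- **Stability of the reduced matrix `C` (proof of Proposition 4.3).**
If `Q` is an `m×m` real matrix (`m = n+1 ≥ 1`) with zero row sums whose
characteristic polynomial over `ℂ` has `0` as a root of multiplicity one and all
other roots with strictly negative real part, then the `(m−1)×(m−1)` matrix `C`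
with `C i j = Q j i − Q m i` is stable: every complex root of its characteristic
polynomial has strictly negative real part. -/
theorem reduced_matrix_stable
    (n : ℕ) (Q : Matrix (Fin (n + 1)) (Fin (n + 1)) ℝ)
    (hQrow : ∀ i, ∑ j, Q i j = 0)
    (hmult : (Q.charpoly.map (algebraMap ℝ ℂ)).rootMultiplicity 0 = 1)
    (hroots : ∀ μ ∈ (Q.charpoly.map (algebraMap ℝ ℂ)).roots, μ ≠ 0 → μ.re < 0)
    (C : Matrix (Fin n) (Fin n) ℝ)
    (hC : ∀ i j : Fin n,
      C i j = Q j.castSucc i.castSucc - Q (Fin.last n) i.castSucc) :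
    ∀ μ ∈ (C.charpoly.map (algebraMap ℝ ℂ)).roots, μ.re < 0 := by
  set lst := Fin.last n with hlst
  set u : Fin (n + 1) → ℝ := fun i => if i = lst then 0 else 1 with hu
  set v : Fin (n + 1) → ℝ := fun j => if j = lst then 1 else 0 with hv
  set W : Matrix (Fin (n + 1)) (Fin (n + 1)) ℝ := vecMulVec u v with hW
  -- W * W = 0
  have hWW : W * W = 0 := by
    ext i j
    simp only [Matrix.mul_apply, hW, vecMulVec_apply, Matrix.zero_apply]
    have : ∀ k : Fin (n+1), u i * v k * (u k * v j)
        = if k = lst then u i * u lst * v j else 0 := by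
      intro k
      by_cases hk : k = lst <;> simp [hv, hk]
    rw [Finset.sum_congr rfl (fun k _ => this k), Finset.sum_ite_eq' Finset.univ lst]
    simp [hu]
  have hPP' : (1 + W) * (1 - W) = 1 := by
    have : (1 + W) * (1 - W) = 1 - W * W := by noncomm_ring
    rw [this, hWW, sub_zero]
  have hP'P : (1 - W) * (1 + W) = 1 := by
    have : (1 - W) * (1 + W) = 1 - W * W := by noncomm_ring
    rw [this, hWW, sub_zero]
  set A : Matrix (Fin (n + 1)) (Fin (n + 1)) ℝ := (1 - W) * Q with hA
  have hAentry : ∀ a b, A a b = Q a b - u a * Q lst b := by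
    intro a b
    rw [hA, Matrix.sub_mul, Matrix.one_mul, Matrix.sub_apply]
    congr 1
    simp only [Matrix.mul_apply, hW, vecMulVec_apply]
    have : ∀ k : Fin (n+1), u a * v k * Q k b = if k = lst then u a * Q lst b else 0 := by
      intro k
      by_cases hk : k = lst <;> simp [hv, hk]
    rw [Finset.sum_congr rfl (fun k _ => this k), Finset.sum_ite_eq' Finset.univ lst]
    simp
  have hArow : ∀ a, ∑ b, A a b = 0 := by
    intro a
    simp only [hAentry]
    rw [Finset.sum_sub_distrib, hQrow, ← Finset.mul_sum, hQrow, mul_zero, sub_zero]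
  have hM : ∀ a b, (A * (1 + W)) a b = if b = lst then 0 else Q a b - u a * Q lst b := by
    intro a b
    rw [Matrix.mul_add, Matrix.mul_one, Matrix.add_apply]
    have h2 : (A * W) a b = (∑ k, A a k * u k) * v b := by
      simp only [Matrix.mul_apply, hW, vecMulVec_apply, Finset.sum_mul, mul_assoc]
    have h3 : ∑ k, A a k * u k = - A a lst := by
      have e1 : ∀ k : Fin (n+1), A a k * u k = A a k - (if k = lst then A a k else 0) := by
        intro k
        by_cases hk : k = lst <;> simp [hu, hk]
      rw [Finset.sum_congr rfl (fun k _ => e1 k), Finset.sum_sub_distrib, hArow,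
        Finset.sum_ite_eq' Finset.univ lst]
      simp
    rw [h2, h3]
    by_cases hb : b = lst
    · simp [hb, hv, hAentry, hu]
    · simp [hb, hv, hAentry]
  -- block decomposition
  set e := finSumFinEquiv (m := n) (n := 1) with he
  have hinl : ∀ i : Fin n, e (Sum.inl i) = i.castSucc := by
    intro i
    simp [he, finSumFinEquiv, Fin.castSucc, Fin.castAdd]
  have hinr : ∀ j : Fin 1, e (Sum.inr j) = lst := by
    intro j
    have : (j : ℕ) = 0 := by omega
    simp only [he, finSumFinEquiv_apply_right]
    ext
    simp [this, hlst]
  have hblock : reindex e.symm e.symm (A * (1 + W))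
      = fromBlocks Cᵀ 0 (Matrix.of fun (_ : Fin 1) j => Q lst (Fin.castSucc j)) 0 := by
    ext i j
    rcases i with i | i <;> rcases j with j | j <;>
      simp only [reindex_apply, submatrix_apply, Equiv.symm_symm, hinl, hinr,
        fromBlocks_apply₁₁, fromBlocks_apply₁₂, fromBlocks_apply₂₁, fromBlocks_apply₂₂,
        Matrix.zero_apply, Matrix.transpose_apply, Matrix.of_apply, hM]
    · rw [if_neg (Fin.castSucc_lt_last j).ne, hC]
      simp [hu, (Fin.castSucc_lt_last i).ne]
      exact fun h => absurd h (Fin.castSucc_lt_last i).ne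
    · simp
    · rw [if_neg (Fin.castSucc_lt_last j).ne]
      simp [hu]
    · simp
  have hone : (0 : Matrix (Fin 1) (Fin 1) ℝ).charpoly = X := by
    rw [Matrix.charpoly, Matrix.det_fin_one, charmatrix_apply_eq]
    simp
  have hcp : Q.charpoly = C.charpoly * X := by
    calc Q.charpoly = ((1 - W) * Q * (1 + W)).charpoly :=
          (charpoly_conj_aux _ _ _ hP'P hPP').symm
      _ = (reindex e.symm e.symm ((1 - W) * Q * (1 + W))).charpoly :=
          (Matrix.charpoly_reindex _ _).symm
      _ = (fromBlocks Cᵀ 0 (Matrix.of fun (_ : Fin 1) j => Q lst (Fin.castSucc j))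
            (0 : Matrix (Fin 1) (Fin 1) ℝ)).charpoly := by rw [← hblock, hA]
      _ = Cᵀ.charpoly * (0 : Matrix (Fin 1) (Fin 1) ℝ).charpoly :=
          Matrix.charpoly_fromBlocks_zero₁₂ _ _ _
      _ = C.charpoly * X := by rw [charpoly_transpose', hone]
  -- conclusion
  set f := algebraMap ℝ ℂ
  have hcpC : Q.charpoly.map f = C.charpoly.map f * X := by
    rw [hcp, Polynomial.map_mul, Polynomial.map_X]
  have hpne : C.charpoly.map f ≠ 0 :=
    ((Matrix.charpoly_monic C).map f).ne_zero
  intro μ hμ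
  have hQroot : μ ∈ (Q.charpoly.map f).roots := by
    rw [hcpC, roots_mul (mul_ne_zero hpne X_ne_zero)]
    exact Multiset.mem_add.2 (Or.inl hμ)
  by_cases hμ0 : μ = 0
  · exfalso
    rw [hcpC, rootMultiplicity_mul (mul_ne_zero hpne X_ne_zero)] at hmult
    have hX : (X : ℂ[X]).rootMultiplicity 0 = 1 := by
      simpa using rootMultiplicity_X_sub_C_self (x := (0 : ℂ))
    have h0 : (C.charpoly.map f).rootMultiplicity 0 = 0 := by omega
    have : ¬ (C.charpoly.map f).IsRoot 0 := by
      rw [← rootMultiplicity_pos hpne] at *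
      omega
    exact this (by rw [← hμ0]; exact isRoot_of_mem_roots hμ)
  · exact hroots μ hQroot hμ0
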